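/- Let N be a closed smooth manifold, α a closed 1-form on N, and v a smooth vector field with α(v) ≡ 1; let F : N × ℝ → N be the flow of −v. Let γ : [0,1] → N be a smooth loop and set m = ∫_γ α. Define η : [0,1] → N by η(t) = F(γ(t), mt) and Φ : [0,1] → ℝ by Φ(t) = ∫_{η|_{[0,t]}} α. Then dΦ/dt = α(dγ/dt) − m for all t, and in particular Φ(1) = ∫_η α = ∫_γ α − m = 0. Moreover, the smooth loop γ̃(t) = F(γ(t), Φ(t)), which is based at γ(0) and freely homotopic to γ via H(t,s) = F(γ(t), sΦ(t)), satisfies α(dγ̃/dt) = m for all t ∈ [0,1]; hence γ̃ is everywhere transverse to the distribution ker α if m ≠ 0, and everywhere tangent to ker α (i.e. lies in a leaf of the foliation defined by α when α is nowhere zero) if m = 0. -/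

import Mathlib

open scoped Manifold
noncomputable section

/-- Euclidean model space. -/
abbrev Euc (n : ℕ) : Type := EuclideanSpace ℝ (Fin n)

/-- A differential `k`-form on a manifold `M` modeled on `Euc n`: a pointwise family of
alternating `k`-linear forms on the tangent spaces (which are canonically `Euc n`). -/
abbrev DForm (n : ℕ) (M : Type*) (k : ℕ) : Type _ :=
  M → (Euc n) [⋀^Fin k]→ₗ[ℝ] ℝ

/-- Wedge product of scalar-valued alternating forms, via `AlternatingMap.domCoprod`. -/
def awedge {E : Type*} [AddCommGroup E] [Module ℝ E] {k l : ℕ}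
    (ω : E [⋀^Fin k]→ₗ[ℝ] ℝ) (τ : E [⋀^Fin l]→ₗ[ℝ] ℝ) : E [⋀^Fin (k + l)]→ₗ[ℝ] ℝ :=
  ((TensorProduct.lid ℝ ℝ).toLinearMap.compAlternatingMap (ω.domCoprod τ)).domDomCongr
    finSumFinEquiv

/-- Pointwise wedge product of differential forms. -/
def wedgeForm {n : ℕ} {M : Type*} {k l : ℕ} (ω : DForm n M k) (τ : DForm n M l) :
    DForm n M (k + l) :=
  fun x => awedge (ω x) (τ x)

section Forms
variable {m n : ℕ} {M : Type*} [TopologicalSpace M] [ChartedSpace (Euc m) M]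
  {N : Type*} [TopologicalSpace N] [ChartedSpace (Euc n) N]

/-- Pullback of a differential form along a map of manifolds, via the manifold derivative. -/
def dpullback (f : M → N) {k : ℕ} (ω : DForm n N k) : DForm m M k :=
  fun x => (ω (f x)).compLinearMap
    ((mfderiv (𝓡 m) (𝓡 n) f x).toLinearMap : Euc m →ₗ[ℝ] Euc n)

/-- The local representative of a form in the extended chart at `x₀`. -/
def localForm (x₀ : M) {k : ℕ} (ω : DForm m M k) : DForm m (Euc m) k :=
  dpullback ((extChartAt (𝓡 m) x₀).symm) ω

/-- Smoothness of a differential form, expressed in the extended charts. -/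
def IsSmoothForm {k : ℕ} (ω : DForm m M k) : Prop :=
  ∀ (x₀ : M) (v : Fin k → Euc m),
    ContDiffOn ℝ (⊤ : ℕ∞) (fun y => localForm x₀ ω y v) (extChartAt (𝓡 m) x₀).target

/-- `θ` is the exterior derivative of `ω`: in every extended chart the standard
alternating-sum formula for `d` applied to the local representative of `ω` yields the
local representative of `θ`. -/
def IsExtDerivOf {k : ℕ} (ω : DForm m M k) (θ : DForm m M (k + 1)) : Prop :=
  ∀ (x₀ : M), ∀ y ∈ (extChartAt (𝓡 m) x₀).target, ∀ v : Fin (k + 1) → Euc m,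
    (∑ i : Fin (k + 1), (-1 : ℝ) ^ (i : ℕ) *
        fderiv ℝ (fun z => localForm x₀ ω z (v ∘ i.succAbove)) y (v i))
      = localForm x₀ θ y v

/-- A differential form is closed if its exterior derivative vanishes. -/
def IsClosedForm {k : ℕ} (ω : DForm m M k) : Prop :=
  IsExtDerivOf ω (fun _ => 0)

end Forms



open scoped ContDiff
open Set Filter

lemma update_one {E : Type*} (a b : E) : Function.update ![a] 0 b = ![b] := by
  funext i; fin_cases i; simp

def evalOne {E : Type*} [AddCommGroup E] [Module ℝ E] (alf : E [⋀^Fin 1]→ₗ[ℝ] ℝ) : E →ₗ[ℝ] ℝ where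
  toFun a := alf ![a]
  map_add' a b := by
    show alf ![a + b] = alf ![a] + alf ![b]
    rw [← update_one a (a+b), alf.map_update_add, update_one, update_one]
  map_smul' c a := by
    show alf ![c • a] = c • alf ![a]
    rw [← update_one a (c • a), alf.map_update_smul, update_one]

@[simp] lemma evalOne_apply {E : Type*} [AddCommGroup E] [Module ℝ E]
    (alf : E [⋀^Fin 1]→ₗ[ℝ] ℝ) (a : E) : evalOne alf a = alf ![a] := rfl

section EucCore
variable {n : ℕ}

def eb (n : ℕ) (i : Fin n) : Euc n := EuclideanSpace.single i 1

lemma euc_decomp (w : Euc n) : w = ∑ i, w i • eb n i := by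
  ext j
  have : (∑ i, w i • eb n i) j = ∑ i, (w i • eb n i) j := by rw [WithLp.ofLp_sum]; exact Finset.sum_apply (a := j) _ _
  rw [this]
  simp [eb, EuclideanSpace.single_apply]

lemma beta_decomp (alf : (Euc n) [⋀^Fin 1]→ₗ[ℝ] ℝ) (w : Euc n) :
    alf ![w] = ∑ i, w i * alf ![eb n i] := by
  have := congrArg (evalOne alf) (euc_decomp w)
  rw [map_sum] at this
  simpa using this

variable {β : Euc n → ((Euc n) [⋀^Fin 1]→ₗ[ℝ] ℝ)} {U : Set (Euc n)}

lemma beta_diffAt (hU : IsOpen U) (hβ : ∀ w, ContDiffOn ℝ ∞ (fun y => β y ![w]) U)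
    {y : Euc n} (hy : y ∈ U) (w : Euc n) :
    ContDiffAt ℝ ∞ (fun z => β z ![w]) y :=
  ((hβ w) y hy).contDiffAt (hU.mem_nhds hy)

lemma fderiv_beta_linear (hU : IsOpen U) (hβ : ∀ w, ContDiffOn ℝ ∞ (fun y => β y ![w]) U)
    {y : Euc n} (hy : y ∈ U) (w b : Euc n) :
    fderiv ℝ (fun z => β z ![w]) y b = ∑ i, w i * fderiv ℝ (fun z => β z ![eb n i]) y b := by
  have h1 : (fun z => β z ![w]) = fun z => ∑ i, w i * β z ![eb n i] :=
    funext fun z => beta_decomp _ _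
  rw [h1, fderiv_fun_sum (fun i _ => ((beta_diffAt hU hβ hy (eb n i)).differentiableAt
      (by simp)).const_mul _)]
  rw [ContinuousLinearMap.sum_apply]
  congr 1; funext i
  rw [fderiv_const_mul ((beta_diffAt hU hβ hy (eb n i)).differentiableAt (by simp))]
  rfl

lemma euc_core (hU : IsOpen U) (hβ : ∀ w, ContDiffOn ℝ ∞ (fun y => β y ![w]) U)
    (hsym : ∀ y ∈ U, ∀ a b : Euc n,
      fderiv ℝ (fun z => β z ![a]) y b = fderiv ℝ (fun z => β z ![b]) y a)
    (G : ℝ × ℝ → Euc n) {V : Set (ℝ × ℝ)} (hV : IsOpen V)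
    (hGsm : ∀ p ∈ V, ContDiffAt ℝ ∞ G p) (hGU : ∀ p ∈ V, G p ∈ U)
    (hconst : ∀ p ∈ V, β (G p) ![fderiv ℝ G p (0,1)] = -1)
    {p₀ : ℝ × ℝ} (hp₀ : p₀ ∈ V) :
    HasDerivAt (fun s => β (G (p₀.1, s)) ![fderiv ℝ G (p₀.1, s) (1,0)]) 0 p₀.2 := by
  classical
  set A : ℝ × ℝ → (ℝ × ℝ →L[ℝ] Euc n) := fun p => fderiv ℝ G p with hA_def
  set y₀ := G p₀
  have hy₀ : y₀ ∈ U := hGU p₀ hp₀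
  set D2 := fderiv ℝ A p₀ with hD2_def
  have hGp₀ : ContDiffAt ℝ ∞ G p₀ := hGsm p₀ hp₀
  have hA : HasFDerivAt A D2 p₀ := by
    have : ContDiffAt ℝ ∞ A p₀ := hGp₀.fderiv_right (by exact_mod_cast le_top)
    exact (this.differentiableAt (by simp)).hasFDerivAt
  have hGdiff : DifferentiableAt ℝ G p₀ := hGp₀.differentiableAt (by simp)
  set u := A p₀ (1, 0) with hu_def
  set w := A p₀ (0, 1) with hw_def
  set Q : Euc n → Euc n → ℝ := fun a b => fderiv ℝ (fun z => β z ![a]) y₀ b with hQ_def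
  set c : Fin n → (ℝ × ℝ → ℝ) := fun i p => β (G p) ![eb n i] with hc_def
  -- slice curves
  have hline_s : HasDerivAt (fun s : ℝ => (p₀.1, s)) ((0 : ℝ), (1 : ℝ)) p₀.2 :=
    (hasDerivAt_const _ _).prodMk (hasDerivAt_id _)
  have hline_t : HasDerivAt (fun t : ℝ => (t, p₀.2)) ((1 : ℝ), (0 : ℝ)) p₀.1 :=
    (hasDerivAt_id _).prodMk (hasDerivAt_const _ _)
  have hGs : HasDerivAt (fun s => G (p₀.1, s)) w p₀.2 := by
    have := hGdiff.hasFDerivAt.comp_hasDerivAt p₀.2 hline_s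
    exact this
  have hGt : HasDerivAt (fun t => G (t, p₀.2)) u p₀.1 := by
    have := hGdiff.hasFDerivAt.comp_hasDerivAt p₀.1 hline_t
    exact this
  have hAs : HasDerivAt (fun s => A (p₀.1, s)) (D2 (0, 1)) p₀.2 := by
    exact hA.comp_hasDerivAt p₀.2 hline_s
  have hAt : HasDerivAt (fun t => A (t, p₀.2)) (D2 (1, 0)) p₀.1 := by
    exact hA.comp_hasDerivAt p₀.1 hline_t
  -- coordinates of A applied to direction
  have hAs10 : ∀ i, HasDerivAt (fun s => (A (p₀.1, s) (1, 0) : Euc n) i)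
      ((D2 (0, 1) (1, 0) : Euc n) i) p₀.2 := by
    intro i
    have h1 : HasDerivAt (fun s => A (p₀.1, s) (1, 0)) (D2 (0, 1) (1, 0)) p₀.2 := by
      simpa using hAs.clm_apply (hasDerivAt_const _ ((1 : ℝ), (0 : ℝ)))
    exact (EuclideanSpace.proj i : Euc n →L[ℝ] ℝ).hasFDerivAt.comp_hasDerivAt _ h1
  have hAt01 : ∀ i, HasDerivAt (fun t => (A (t, p₀.2) (0, 1) : Euc n) i)
      ((D2 (1, 0) (0, 1) : Euc n) i) p₀.1 := by
    intro i
    have h1 : HasDerivAt (fun t => A (t, p₀.2) (0, 1)) (D2 (1, 0) (0, 1)) p₀.1 := by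
      simpa using hAt.clm_apply (hasDerivAt_const _ ((0 : ℝ), (1 : ℝ)))
    exact (EuclideanSpace.proj i : Euc n →L[ℝ] ℝ).hasFDerivAt.comp_hasDerivAt _ h1
  -- coefficient functions
  have hcs : ∀ i, HasDerivAt (fun s => c i (p₀.1, s)) (Q (eb n i) w) p₀.2 := fun i =>
    ((beta_diffAt hU hβ hy₀ (eb n i)).differentiableAt (by simp)).hasFDerivAt.comp_hasDerivAt (l := fun z => β z ![eb n i]) _ hGs
  have hct : ∀ i, HasDerivAt (fun t => c i (t, p₀.2)) (Q (eb n i) u) p₀.1 := fun i =>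
    ((beta_diffAt hU hβ hy₀ (eb n i)).differentiableAt (by simp)).hasFDerivAt.comp_hasDerivAt (l := fun z => β z ![eb n i]) _ hGt
  -- the two sums
  set S1 : ℝ := ∑ i, ((D2 (0, 1) (1, 0) : Euc n) i * c i p₀ + (u : Euc n) i * Q (eb n i) w)
  set S2 : ℝ := ∑ i, ((D2 (1, 0) (0, 1) : Euc n) i * c i p₀ + (w : Euc n) i * Q (eb n i) u)
  have hφ : HasDerivAt (fun s => β (G (p₀.1, s)) ![A (p₀.1, s) (1, 0)]) S1 p₀.2 := by
    have : HasDerivAt (fun s => ∑ i, (A (p₀.1, s) (1, 0) : Euc n) i * c i (p₀.1, s)) S1 p₀.2 :=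
      HasDerivAt.fun_sum fun i _ => ((hAs10 i).mul (hcs i)).congr_deriv (by simp [hu_def])
    refine this.congr_of_eventuallyEq ?_
    filter_upwards with s
    exact beta_decomp _ _
  have hψ : HasDerivAt (fun t => β (G (t, p₀.2)) ![A (t, p₀.2) (0, 1)]) S2 p₀.1 := by
    have : HasDerivAt (fun t => ∑ i, (A (t, p₀.2) (0, 1) : Euc n) i * c i (t, p₀.2)) S2 p₀.1 :=
      HasDerivAt.fun_sum fun i _ => ((hAt01 i).mul (hct i)).congr_deriv (by simp [hw_def])
    refine this.congr_of_eventuallyEq ?_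
    filter_upwards with t
    exact beta_decomp _ _
  -- ψ is locally constant -1 in t
  have hS2 : S2 = 0 := by
    have hev : (fun t => β (G (t, p₀.2)) ![A (t, p₀.2) (0, 1)]) =ᶠ[nhds p₀.1]
        (fun _ => (-1 : ℝ)) := by
      have hmem : ∀ᶠ t in nhds p₀.1, (t, p₀.2) ∈ V := by
        have : ContinuousAt (fun t : ℝ => (t, p₀.2)) p₀.1 := hline_t.continuousAt
        exact this.preimage_mem_nhds (hV.mem_nhds (by simpa using hp₀))
      filter_upwards [hmem] with t ht
      exact hconst _ ht
    have h0 : HasDerivAt (fun t => β (G (t, p₀.2)) ![A (t, p₀.2) (0, 1)]) 0 p₀.1 :=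
      (hasDerivAt_const p₀.1 (-1 : ℝ)).congr_of_eventuallyEq hev
    exact hψ.unique h0
  -- Schwarz and closedness: S1 = S2
  have hschwarz : D2 (0, 1) (1, 0) = D2 (1, 0) (0, 1) := by
    have := (hGp₀.isSymmSndFDerivAt (by simp; exact WithTop.coe_le_coe.mpr le_top)).eq (0, 1) (1, 0)
    simpa [hD2_def, hA_def] using this
  have hQsum1 : ∑ i, (u : Euc n) i * Q (eb n i) w = Q u w :=
    (fderiv_beta_linear hU hβ hy₀ u w).symm
  have hQsum2 : ∑ i, (w : Euc n) i * Q (eb n i) u = Q w u :=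
    (fderiv_beta_linear hU hβ hy₀ w u).symm
  have hS1S2 : S1 = S2 := by
    simp only [S1, S2, Finset.sum_add_distrib, hschwarz, hQsum1, hQsum2]
    congr 1
    exact hsym y₀ hy₀ u w
  have hS1 : S1 = 0 := hS1S2.trans hS2
  rw [hS1] at hφ
  simpa [hA_def] using hφ

lemma phi_smoothAt (hU : IsOpen U) (hβ : ∀ w, ContDiffOn ℝ ∞ (fun y => β y ![w]) U)
    (G : ℝ × ℝ → Euc n) {V : Set (ℝ × ℝ)} (hV : IsOpen V)
    (hGsm : ∀ p ∈ V, ContDiffAt ℝ ∞ G p) (hGU : ∀ p ∈ V, G p ∈ U)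
    (w₀ : ℝ × ℝ) {p : ℝ × ℝ} (hp : p ∈ V) :
    ContDiffAt ℝ ∞ (fun q => β (G q) ![fderiv ℝ G q w₀]) p := by
  have heq : (fun q => β (G q) ![fderiv ℝ G q w₀])
      = fun q => ∑ i, (fderiv ℝ G q w₀ : Euc n) i * β (G q) ![eb n i] :=
    funext fun q => beta_decomp _ _
  rw [heq]
  apply ContDiffAt.sum
  intro i _
  apply ContDiffAt.mul
  · exact ((EuclideanSpace.proj i : Euc n →L[ℝ] ℝ).contDiff.comp_contDiffAt p
      (((hGsm p hp).fderiv_right (by exact_mod_cast le_top)).clm_apply contDiffAt_const))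
  · exact (beta_diffAt hU hβ (hGU p hp) (eb n i)).comp p (hGsm p hp)

end EucCore

section ManifoldAux
variable {n : ℕ} {N : Type*} [TopologicalSpace N] [ChartedSpace (Euc n) N]
  [IsManifold (𝓡 n) ((⊤ : ℕ∞) : WithTop ℕ∞) N] [BoundarylessManifold (𝓡 n) N]

lemma map_vec1 {E F : Type*} (L : E → F) (w : E) :
    (fun i : Fin 1 => L (![w] i)) = ![L w] := by
  funext i; fin_cases i; simp

lemma alpha_chart (α : DForm n N 1) (x₀ : N) (c : ℝ → N) (t : ℝ)
    (hc : MDifferentiableAt 𝓘(ℝ, ℝ) (𝓡 n) c t)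
    (hmem : c t ∈ (extChartAt (𝓡 n) x₀).source) :
    α (c t) ![mfderiv 𝓘(ℝ, ℝ) (𝓡 n) c t (1:ℝ)]
      = localForm x₀ α (extChartAt (𝓡 n) x₀ (c t))
          ![deriv (fun u => extChartAt (𝓡 n) x₀ (c u)) t] := by
  have htar : extChartAt (𝓡 n) x₀ (c t) ∈ (extChartAt (𝓡 n) x₀).target :=
    (extChartAt (𝓡 n) x₀).map_source hmem
  have hev : ∀ᶠ u in nhds t, c u ∈ (extChartAt (𝓡 n) x₀).source :=
    hc.continuousAt.preimage_mem_nhds ((isOpen_extChartAt_source x₀).mem_nhds hmem)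
  have hcdiff : MDifferentiableAt 𝓘(ℝ, ℝ) (𝓡 n) (fun u => extChartAt (𝓡 n) x₀ (c u)) t := by
    have h2 : ContMDiffAt (𝓡 n) (𝓡 n) ∞ (extChartAt (𝓡 n) x₀) (c t) :=
      contMDiffAt_extChartAt' (by rwa [extChartAt_source] at hmem)
    exact (h2.mdifferentiableAt (by simp)).comp t hc
  have hsymm : MDifferentiableAt (𝓡 n) (𝓡 n) (extChartAt (𝓡 n) x₀).symm
      (extChartAt (𝓡 n) x₀ (c t)) :=
    (mdifferentiableWithinAt_extChartAt_symm htar).mdifferentiableAt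
      (by rw [(𝓡 n).range_eq_univ]; exact Filter.univ_mem)
  have hcomp : c =ᶠ[nhds t]
      fun u => (extChartAt (𝓡 n) x₀).symm (extChartAt (𝓡 n) x₀ (c u)) := by
    filter_upwards [hev] with u hu
    exact ((extChartAt (𝓡 n) x₀).left_inv hu).symm
  have h1 : mfderiv 𝓘(ℝ, ℝ) (𝓡 n) c t
      = (mfderiv (𝓡 n) (𝓡 n) (extChartAt (𝓡 n) x₀).symm (extChartAt (𝓡 n) x₀ (c t))).comp
        (mfderiv 𝓘(ℝ, ℝ) (𝓡 n) (fun u => extChartAt (𝓡 n) x₀ (c u)) t) := by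
    rw [hcomp.mfderiv_eq]
    exact mfderiv_comp t hsymm hcdiff
  have h2 : mfderiv 𝓘(ℝ, ℝ) (𝓡 n) (fun u => extChartAt (𝓡 n) x₀ (c u)) t (1:ℝ)
      = deriv (fun u => extChartAt (𝓡 n) x₀ (c u)) t := by
    rw [mfderiv_eq_fderiv]
    show fderiv ℝ (fun u => extChartAt (𝓡 n) x₀ (c u)) t (1:ℝ) = _
    exact fderiv_apply_one_eq_deriv
  simp only [localForm, dpullback, AlternatingMap.compLinearMap_apply]
  erw [AlternatingMap.compLinearMap_apply]
  rw [map_vec1]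
  rw [(extChartAt (𝓡 n) x₀).left_inv hmem]
  congr 1
  rw [h1, ← h2]
  rfl

lemma closed_sym (α : DForm n N 1) (hαc : IsClosedForm α) (x₀ : N) {y : Euc n}
    (hy : y ∈ (extChartAt (𝓡 n) x₀).target) (a b : Euc n) :
    fderiv ℝ (fun z => localForm x₀ α z ![a]) y b
      = fderiv ℝ (fun z => localForm x₀ α z ![b]) y a := by
  have h := hαc x₀ y hy ![b, a]
  rw [Fin.sum_univ_two] at h
  have e0 : (![b, a] ∘ (0 : Fin 2).succAbove) = ![a] := by
    funext i; fin_cases i; rfl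
  have e1 : (![b, a] ∘ (1 : Fin 2).succAbove) = ![b] := by
    funext i; fin_cases i; rfl
  rw [e0, e1] at h
  have hz : localForm x₀ (fun _ => (0 : (Euc n) [⋀^Fin (1+1)]→ₗ[ℝ] ℝ)) y ![b, a] = 0 := by
    exact rfl
  rw [hz] at h
  simp only [Fin.val_zero, pow_zero, one_mul, Fin.val_one, pow_one, neg_one_mul,
    Matrix.cons_val_zero, Matrix.cons_val_one, Matrix.head_cons] at h
  linarith

end ManifoldAux


/-- **Straightening a loop along the flow (Lemma 2.1, main computation).** Let `N` be a
closed smooth manifold, `α` a closed smooth 1-form, `v` a smooth vector field with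
`α(v) ≡ 1`, and `F` the flow of `-v`. Let `γ : [0,1] → N` be a smooth loop and set
`m = ∫_γ α`. Define `η(t) = F(γ(t), mt)` and `Φ(t) = ∫_{η|[0,t]} α`. Then
`Φ'(t) = α(γ'(t)) − m` for all `t`, and in particular `Φ(1) = 0`. Moreover the smooth loop
`γ̃(t) = F(γ(t), Φ(t))`, which is based at `γ(0)` and freely homotopic to `γ` via
`H(t,s) = F(γ(t), sΦ(t))`, satisfies `α(γ̃'(t)) = m` for all `t`; hence `γ̃` is everywhere
transverse to `ker α` if `m ≠ 0`, and everywhere tangent to `ker α` (contained in a leaf of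
the foliation defined by `α`) if `m = 0`. -/
theorem loop_straightening_along_flow
    {n : ℕ} {N : Type*} [TopologicalSpace N] [T2Space N] [ChartedSpace (Euc n) N]
    [IsManifold (𝓡 n) ((⊤ : ℕ∞) : WithTop ℕ∞) N] [CompactSpace N] [BoundarylessManifold (𝓡 n) N]
    (α : DForm n N 1) (hαs : IsSmoothForm α) (hαc : IsClosedForm α)
    (v : (x : N) → TangentSpace (𝓡 n) x)
    (hv : ContMDiff (𝓡 n) (𝓡 n).tangent (⊤ : ℕ∞)
      (fun x => (⟨x, v x⟩ : TangentBundle (𝓡 n) N)))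
    (hαv : ∀ q : N, α q ![v q] = 1)
    (F : N → ℝ → N)
    (hF0 : ∀ q, F q 0 = q)
    (hFflow : ∀ q, IsMIntegralCurve (F q) (fun x => -v x))
    (hFsmooth : ContMDiff ((𝓡 n).prod 𝓘(ℝ, ℝ)) (𝓡 n) (⊤ : ℕ∞) (fun z : N × ℝ => F z.1 z.2))
    (γ : ℝ → N) (hγ : ContMDiff 𝓘(ℝ, ℝ) (𝓡 n) (⊤ : ℕ∞) γ) (hγloop : γ 1 = γ 0) :
    let γ' : ℝ → Euc n := fun t => mfderiv 𝓘(ℝ, ℝ) (𝓡 n) γ t (1 : ℝ)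
    let m : ℝ := ∫ t in (0:ℝ)..1, α (γ t) ![γ' t]
    let η : ℝ → N := fun t => F (γ t) (m * t)
    let η' : ℝ → Euc n := fun t => mfderiv 𝓘(ℝ, ℝ) (𝓡 n) η t (1 : ℝ)
    let Φ : ℝ → ℝ := fun t => ∫ s in (0:ℝ)..t, α (η s) ![η' s]
    let γtilde : ℝ → N := fun t => F (γ t) (Φ t)
    let γtilde' : ℝ → Euc n := fun t => mfderiv 𝓘(ℝ, ℝ) (𝓡 n) γtilde t (1 : ℝ)
    (∀ t ∈ Set.Icc (0:ℝ) 1, deriv Φ t = α (γ t) ![γ' t] - m) ∧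
    Φ 1 = 0 ∧
    ContMDiff 𝓘(ℝ, ℝ) (𝓡 n) (⊤ : ℕ∞) γtilde ∧
    γtilde 0 = γ 0 ∧ γtilde 1 = γ 0 ∧
    (∀ t, F (γ t) ((0 : ℝ) * Φ t) = γ t) ∧
    (∀ t, F (γ t) ((1 : ℝ) * Φ t) = γtilde t) ∧
    (∀ t ∈ Set.Icc (0:ℝ) 1, α (γtilde t) ![γtilde' t] = m) ∧
    (m ≠ 0 → ∀ t ∈ Set.Icc (0:ℝ) 1, α (γtilde t) ![γtilde' t] ≠ 0) ∧
    (m = 0 → ∀ t ∈ Set.Icc (0:ℝ) 1, α (γtilde t) ![γtilde' t] = 0) := by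
  intro γ' m η η' Φ γtilde γtilde'
  -- the two-parameter family G(t,s) = F (γ t) s
  set G : ℝ × ℝ → N := fun p => F (γ p.1) p.2 with hGdef
  have hGsm : ContMDiff 𝓘(ℝ, ℝ × ℝ) (𝓡 n) ∞ G := by
    have h1 : ContMDiff 𝓘(ℝ, ℝ × ℝ) ((𝓡 n).prod 𝓘(ℝ, ℝ)) ∞ (fun p : ℝ × ℝ => (γ p.1, p.2)) :=
      (hγ.comp (contMDiff_iff_contDiff.mpr contDiff_fst)).prodMk
        (contMDiff_iff_contDiff.mpr contDiff_snd)
    exact hFsmooth.comp h1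
  set DG : (p : ℝ × ℝ) → (ℝ × ℝ →L[ℝ] Euc n) :=
    fun p => mfderiv 𝓘(ℝ, ℝ × ℝ) (𝓡 n) G p with hDGdef
  -- chain rule for curves through G
  have hcurve : ∀ (z : ℝ → ℝ × ℝ) (t₀ : ℝ) (z' : ℝ × ℝ), HasDerivAt z z' t₀ →
      mfderiv 𝓘(ℝ, ℝ) (𝓡 n) (fun u => G (z u)) t₀ (1:ℝ) = DG (z t₀) z' := by
    intro z t₀ z' hz
    have hzm : MDifferentiableAt 𝓘(ℝ, ℝ) 𝓘(ℝ, ℝ × ℝ) z t₀ :=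
      mdifferentiableAt_iff_differentiableAt.mpr hz.differentiableAt
    have hcomp : mfderiv 𝓘(ℝ, ℝ) (𝓡 n) (fun u => G (z u)) t₀
        = (DG (z t₀)).comp (mfderiv 𝓘(ℝ, ℝ) 𝓘(ℝ, ℝ × ℝ) z t₀) :=
      mfderiv_comp t₀ ((hGsm (z t₀)).mdifferentiableAt (by simp)) hzm
    rw [hcomp]
    show DG (z t₀) (mfderiv 𝓘(ℝ, ℝ) 𝓘(ℝ, ℝ × ℝ) z t₀ (1:ℝ)) = _
    congr 1
    rw [mfderiv_eq_fderiv]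
    show fderiv ℝ z t₀ (1:ℝ) = z'
    rw [fderiv_apply_one_eq_deriv]
    exact hz.deriv
  have hDt : ∀ t s : ℝ, mfderiv 𝓘(ℝ, ℝ) (𝓡 n) (fun u => G (u, s)) t (1:ℝ) = DG (t, s) (1, 0) :=
    fun t s => hcurve (fun u => (u, s)) t (1, 0) ((hasDerivAt_id t).prodMk (hasDerivAt_const t s))
  have hDs : ∀ t s : ℝ, mfderiv 𝓘(ℝ, ℝ) (𝓡 n) (fun u => G (t, u)) s (1:ℝ) = DG (t, s) (0, 1) :=
    fun t s => hcurve (fun u => (t, u)) s (0, 1) ((hasDerivAt_const s t).prodMk (hasDerivAt_id s))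
  have hflowd : ∀ t s : ℝ, DG (t, s) (0, 1) = -v (G (t, s)) := by
    intro t s
    rw [← hDs t s]
    have h := (hFflow (γ t) s).mfderiv
    have h2 : mfderiv 𝓘(ℝ, ℝ) (𝓡 n) (fun u => G (t, u)) s (1:ℝ)
        = ((1 : ℝ →L[ℝ] ℝ).smulRight (-v (F (γ t) s))) (1:ℝ) := by
      rw [show (fun u => G (t, u)) = F (γ t) from rfl, h]
      rfl
    rw [h2]
    simp; rfl
  have hαm1 : ∀ t s : ℝ, α (G (t, s)) ![DG (t, s) (0, 1)] = -1 := by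
    intro t s
    rw [hflowd t s]
    have hneg := (evalOne (α (G (t, s)))).map_neg (v (G (t, s)))
    simp only [evalOne_apply] at hneg
    exact hneg.trans (congrArg Neg.neg (hαv (G (t, s))))
  set H : ℝ × ℝ → ℝ := fun p => α (G p) ![DG p (1, 0)] with hHdef
  -- local computation in charts
  have key : ∀ p₀ : ℝ × ℝ, HasDerivAt (fun s => H (p₀.1, s)) 0 p₀.2 ∧
      ContDiffAt ℝ ∞ (fun t => H (t, p₀.2)) p₀.1 := by
    rintro ⟨t₀, s₀⟩
    set x₀ := G (t₀, s₀) with hx₀def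
    set V : Set (ℝ × ℝ) := G ⁻¹' (extChartAt (𝓡 n) x₀).source with hVdef
    have hVopen : IsOpen V := (isOpen_extChartAt_source x₀).preimage hGsm.continuous
    have hp₀V : (t₀, s₀) ∈ V := mem_extChartAt_source x₀
    set Gh : ℝ × ℝ → Euc n := fun p => extChartAt (𝓡 n) x₀ (G p) with hGhdef
    have hGhsm : ∀ p ∈ V, ContDiffAt ℝ ∞ Gh p := by
      intro p hp
      have hp' : G p ∈ (extChartAt (𝓡 n) x₀).source := hp
      rw [extChartAt_source] at hp'
      have h2 : ContMDiffAt (𝓡 n) (𝓡 n) ∞ (extChartAt (𝓡 n) x₀) (G p) :=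
        contMDiffAt_extChartAt' hp'
      exact contMDiffAt_iff_contDiffAt.mp (h2.comp p (hGsm p))
    have hGhtar : ∀ p ∈ V, Gh p ∈ (extChartAt (𝓡 n) x₀).target := fun p hp =>
      (extChartAt (𝓡 n) x₀).map_source hp
    have hGh_fd : ∀ p ∈ V, HasFDerivAt Gh (fderiv ℝ Gh p) p := fun p hp =>
      ((hGhsm p hp).differentiableAt (by simp)).hasFDerivAt
    have hrep1 : ∀ p ∈ V, H p = localForm x₀ α (Gh p) ![fderiv ℝ Gh p (1, 0)] := by
      rintro ⟨t, s⟩ hp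
      have hcin : MDifferentiableAt 𝓘(ℝ, ℝ) (𝓡 n) (fun u => G (u, s)) t :=
        ((hGsm (t, s)).mdifferentiableAt (by simp)).comp t
          (mdifferentiableAt_iff_differentiableAt.mpr
            ((hasDerivAt_id t).prodMk (hasDerivAt_const t s)).differentiableAt)
      have hac := alpha_chart α x₀ (fun u => G (u, s)) t hcin hp
      rw [hDt t s] at hac
      have hder : deriv (fun u => Gh (u, s)) t = fderiv ℝ Gh (t, s) (1, 0) :=
        ((hGh_fd (t, s) hp).comp_hasDerivAt (l := Gh) t
          ((hasDerivAt_id t).prodMk (hasDerivAt_const t s))).deriv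
      rw [← hder]
      exact hac
    have hrep2 : ∀ p ∈ V, localForm x₀ α (Gh p) ![fderiv ℝ Gh p (0, 1)] = -1 := by
      rintro ⟨t, s⟩ hp
      have hcin : MDifferentiableAt 𝓘(ℝ, ℝ) (𝓡 n) (fun u => G (t, u)) s :=
        ((hGsm (t, s)).mdifferentiableAt (by simp)).comp s
          (mdifferentiableAt_iff_differentiableAt.mpr
            ((hasDerivAt_const s t).prodMk (hasDerivAt_id s)).differentiableAt)
      have hac := alpha_chart α x₀ (fun u => G (t, u)) s hcin hp
      rw [hDs t s] at hac
      have hder : deriv (fun u => Gh (t, u)) s = fderiv ℝ Gh (t, s) (0, 1) :=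
        ((hGh_fd (t, s) hp).comp_hasDerivAt (l := Gh) s
          ((hasDerivAt_const s t).prodMk (hasDerivAt_id s))).deriv
      rw [← hder, ← hac]
      exact hαm1 t s
    constructor
    · have hcore := euc_core (isOpen_extChartAt_target x₀)
        (fun w => (hαs x₀ ![w]).of_le (by simp))
        (fun y hy a b => closed_sym α hαc x₀ hy a b) Gh hVopen hGhsm hGhtar
        (fun p hp => hrep2 p hp) hp₀V
      refine hcore.congr_of_eventuallyEq ?_
      have hev : ∀ᶠ s in nhds s₀, (t₀, s) ∈ V :=
        ((continuous_const.prodMk continuous_id).continuousAt).preimage_mem_nhds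
          (hVopen.mem_nhds hp₀V)
      filter_upwards [hev] with s hs
      exact hrep1 (t₀, s) hs
    · have hsm := phi_smoothAt (isOpen_extChartAt_target x₀)
        (fun w => (hαs x₀ ![w]).of_le (by simp)) Gh hVopen hGhsm hGhtar (1, 0) hp₀V
      have hline : ContDiffAt ℝ ∞ (fun t : ℝ => (t, s₀)) t₀ :=
        (contDiff_id.prodMk contDiff_const).contDiffAt
      have hcomp := hsm.comp t₀ hline
      refine hcomp.congr_of_eventuallyEq ?_
      have hev : ∀ᶠ t in nhds t₀, (t, s₀) ∈ V :=
        ((continuous_id.prodMk continuous_const).continuousAt).preimage_mem_nhds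
          (hVopen.mem_nhds hp₀V)
      filter_upwards [hev] with t ht
      exact hrep1 (t, s₀) ht
  -- H is independent of s
  have hHconst : ∀ t s : ℝ, H (t, s) = H (t, 0) := by
    intro t s
    have hd : Differentiable ℝ (fun s => H (t, s)) := fun s' => ((key (t, s')).1).differentiableAt
    have hz : ∀ s', deriv (fun s => H (t, s)) s' = 0 := fun s' => ((key (t, s')).1).deriv
    exact is_const_of_deriv_eq_zero hd hz s 0
  have hG0 : (fun u : ℝ => G (u, 0)) = γ := funext fun u => hF0 (γ u)
  have hHγ : ∀ t s : ℝ, H (t, s) = α (γ t) ![γ' t] := by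
    intro t s
    rw [hHconst t s]
    show α (G (t, 0)) ![DG (t, 0) (1, 0)] = _
    rw [← hDt t 0, hG0, show G (t, 0) = γ t from hF0 (γ t)]
  -- evaluation of α on combinations
  have heval : ∀ t s cc : ℝ, α (G (t, s)) ![DG (t, s) (1, cc)] = α (γ t) ![γ' t] - cc := by
    intro t s cc
    have hsplit : DG (t, s) (1, cc) = DG (t, s) (1, 0) + cc • DG (t, s) (0, 1) := by
      rw [← (DG (t, s)).map_smul, ← (DG (t, s)).map_add]
      congr 1
      simp
    have hadd := (evalOne (α (G (t, s)))).map_add (DG (t, s) (1, 0)) (cc • DG (t, s) (0, 1))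
    have hsmul := (evalOne (α (G (t, s)))).map_smul cc (DG (t, s) (0, 1))
    simp only [evalOne_apply] at hadd hsmul
    have h4 : α (G (t, s)) ![DG (t, s) (1, 0)] = α (γ t) ![γ' t] := hHγ t s
    rw [hsplit, hadd, hsmul, smul_eq_mul, hαm1 t s, h4]
    ring
  -- smoothness of t ↦ α(γ')(t)
  have hαγcd : ContDiff ℝ ∞ (fun t => α (γ t) ![γ' t]) := by
    rw [contDiff_iff_contDiffAt]
    intro t₀
    exact ((key (t₀, 0)).2).congr_of_eventuallyEq
      (Filter.Eventually.of_forall fun t => (hHγ t 0).symm)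
  -- the integrand of Φ
  have hηfun : (fun s => α (η s) ![η' s]) = fun s => α (γ s) ![γ' s] - m := by
    funext t
    have h1 : mfderiv 𝓘(ℝ, ℝ) (𝓡 n) η t (1:ℝ) = DG (t, m * t) (1, m) :=
      hcurve (fun u => (u, m * u)) t (1, m)
        ((hasDerivAt_id t).prodMk (by simpa using (hasDerivAt_id t).const_mul m))
    show α (G (t, m * t)) ![mfderiv 𝓘(ℝ, ℝ) (𝓡 n) η t (1:ℝ)] = _
    rw [h1]
    exact heval t (m * t) m
  set g : ℝ → ℝ := fun s => α (γ s) ![γ' s] - m with hgdef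
  have hgcd : ContDiff ℝ ∞ g := hαγcd.sub contDiff_const
  have hgcont : Continuous g := hgcd.continuous
  have hΦeq : Φ = fun t => ∫ s in (0:ℝ)..t, g s := by
    funext t
    show (∫ s in (0:ℝ)..t, α (η s) ![η' s]) = _
    rw [hηfun]
  have hΦd : ∀ t : ℝ, HasDerivAt Φ (g t) t := by
    intro t
    have h1 : HasDerivAt (fun u => ∫ s in (0:ℝ)..u, g s) (g t) t :=
      intervalIntegral.integral_hasDerivAt_right (hgcont.intervalIntegrable _ _)
        (hgcont.stronglyMeasurableAtFilter _ _) hgcont.continuousAt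
    rw [hΦeq]
    exact h1
  have conj1 : ∀ t ∈ Set.Icc (0:ℝ) 1, deriv Φ t = α (γ t) ![γ' t] - m :=
    fun t _ => (hΦd t).deriv
  have conj2 : Φ 1 = 0 := by
    have hmeq : (∫ s in (0:ℝ)..1, α (γ s) ![γ' s]) = m := rfl
    rw [hΦeq]
    show (∫ s in (0:ℝ)..1, (α (γ s) ![γ' s] - m)) = 0
    rw [intervalIntegral.integral_sub (hαγcd.continuous.intervalIntegrable _ _)
      (continuous_const.intervalIntegrable _ _), hmeq, intervalIntegral.integral_const]
    simp
  have hΦcd : ContDiff ℝ ∞ Φ := by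
    rw [contDiff_infty_iff_deriv]
    refine ⟨fun t => (hΦd t).differentiableAt, ?_⟩
    have : deriv Φ = g := funext fun t => (hΦd t).deriv
    rw [this]
    exact hgcd
  have conj3 : ContMDiff 𝓘(ℝ, ℝ) (𝓡 n) (⊤ : ℕ∞) γtilde :=
    hFsmooth.comp (hγ.prodMk (contMDiff_iff_contDiff.mpr hΦcd))
  have hΦ0 : Φ 0 = 0 := intervalIntegral.integral_same
  have conj4 : γtilde 0 = γ 0 := by
    show F (γ 0) (Φ 0) = γ 0
    rw [hΦ0]
    exact hF0 (γ 0)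
  have conj5 : γtilde 1 = γ 0 := by
    show F (γ 1) (Φ 1) = γ 0
    rw [conj2, hF0, hγloop]
  have conj6 : ∀ t : ℝ, F (γ t) ((0 : ℝ) * Φ t) = γ t := by
    intro t
    rw [zero_mul]
    exact hF0 (γ t)
  have conj7 : ∀ t : ℝ, F (γ t) ((1 : ℝ) * Φ t) = γtilde t := by
    intro t
    rw [one_mul]
  have conj8 : ∀ t ∈ Set.Icc (0:ℝ) 1, α (γtilde t) ![γtilde' t] = m := by
    intro t _
    have h1 : mfderiv 𝓘(ℝ, ℝ) (𝓡 n) γtilde t (1:ℝ) = DG (t, Φ t) (1, g t) :=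
      hcurve (fun u => (u, Φ u)) t (1, g t) ((hasDerivAt_id t).prodMk (hΦd t))
    show α (G (t, Φ t)) ![mfderiv 𝓘(ℝ, ℝ) (𝓡 n) γtilde t (1:ℝ)] = m
    rw [h1, heval t (Φ t) (g t)]
    show α (γ t) ![γ' t] - (α (γ t) ![γ' t] - m) = m
    ring
  refine ⟨conj1, conj2, conj3, conj4, conj5, conj6, conj7, conj8, ?_, ?_⟩
  · intro hm t ht
    rw [conj8 t ht]
    exact hm
  · intro hm t ht
    rw [conj8 t ht]
    exact hm
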